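/- arXiv:2008.12886 — 5 statements merged into one kernel-verified Lean document; each statement's English description precedes it below -/
import Mathlib

section
/- Multiplication by a matrix with strictly positive entries is nonexpansive in the Hilbert projective metric: if T is an N×N matrix with all entries strictly positive and z, y are strictly positive row vectors, then d(zT, yT) ≤ d(z, y), where d is the Hilbert projective distance. -/
/-- Hilbert projective distance on the strictly positive cone of `ℝ^N`:
`d(z,y) = max_{r ≠ s} |log((z_r/z_s)(y_s/y_r))|`. -/
noncomputable def hilbertDist {N : ℕ} (z y : Fin N → ℝ) : ℝ :=
  ⨆ p : {p : Fin N × Fin N // p.1 ≠ p.2},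
    |Real.log ((z p.1.1 / z p.1.2) * (y p.1.2 / y p.1.1))|

lemma hilbertDist_nonneg {N : ℕ} (z y : Fin N → ℝ) : 0 ≤ hilbertDist z y := by
  unfold hilbertDist
  rcases isEmpty_or_nonempty {p : Fin N × Fin N // p.1 ≠ p.2} with h | h
  · haveI := h
    rw [iSup_of_empty', Real.sSup_empty]
  · exact le_ciSup_of_le (Finite.bddAbove_range _) h.some (abs_nonneg _)

lemma key {N : ℕ} (z y : Fin N → ℝ) (hz : ∀ i, 0 < z i) (hy : ∀ i, 0 < y i)
    (i j : Fin N) : z i * y j ≤ Real.exp (hilbertDist z y) * (z j * y i) := by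
  by_cases hij : i = j
  · subst hij
    have h1 : (1 : ℝ) ≤ Real.exp (hilbertDist z y) :=
      Real.one_le_exp (hilbertDist_nonneg z y)
    nlinarith [mul_pos (hz i) (hy i)]
  · have hle : |Real.log ((z i / z j) * (y j / y i))| ≤ hilbertDist z y :=
      le_ciSup (f := fun p : {p : Fin N × Fin N // p.1 ≠ p.2} =>
          |Real.log ((z p.1.1 / z p.1.2) * (y p.1.2 / y p.1.1))|)
        (Finite.bddAbove_range _) ⟨(i, j), hij⟩
    have hX : 0 < (z i / z j) * (y j / y i) :=
      mul_pos (div_pos (hz i) (hz j)) (div_pos (hy j) (hy i))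
    have hlog : Real.log ((z i / z j) * (y j / y i)) ≤ hilbertDist z y :=
      (abs_le.mp hle).2
    have hXe : (z i / z j) * (y j / y i) ≤ Real.exp (hilbertDist z y) :=
      (Real.log_le_iff_le_exp hX).mp hlog
    have h2 : 0 < z j * y i := mul_pos (hz j) (hy i)
    rw [div_mul_div_comm, div_le_iff₀ h2] at hXe
    linarith

lemma prod_bound {N : ℕ} (T : Matrix (Fin N) (Fin N) ℝ) (hT : ∀ i j, 0 < T i j)
    (z y : Fin N → ℝ) (hz : ∀ i, 0 < z i) (hy : ∀ i, 0 < y i) (r s : Fin N) :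
    (∑ i, z i * T i r) * (∑ j, y j * T j s) ≤
      Real.exp (hilbertDist z y) * ((∑ j, z j * T j s) * (∑ i, y i * T i r)) := by
  rw [Finset.sum_mul_sum]
  calc ∑ i, ∑ j, (z i * T i r) * (y j * T j s)
      ≤ ∑ i, ∑ j, Real.exp (hilbertDist z y) * (z j * y i) * (T i r * T j s) := by
        apply Finset.sum_le_sum; intro i _
        apply Finset.sum_le_sum; intro j _
        have hk := key z y hz hy i j
        nlinarith [mul_le_mul_of_nonneg_right hk (mul_pos (hT i r) (hT j s)).le]
    _ = Real.exp (hilbertDist z y) * ((∑ j, z j * T j s) * (∑ i, y i * T i r)) := by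
        rw [Finset.sum_mul_sum, Finset.mul_sum]
        rw [Finset.sum_comm]
        apply Finset.sum_congr rfl; intro j _
        rw [Finset.mul_sum]
        apply Finset.sum_congr rfl; intro i _
        ring

/-- right multiplication by an entrywise strictly positive matrix
is nonexpansive in the Hilbert projective metric: `d(zT, yT) ≤ d(z, y)`. -/
theorem stmt_5 {N : ℕ} (T : Matrix (Fin N) (Fin N) ℝ)
    (hT : ∀ i j, 0 < T i j)
    (z y : Fin N → ℝ) (hz : ∀ i, 0 < z i) (hy : ∀ i, 0 < y i) :
    hilbertDist (Matrix.vecMul z T) (Matrix.vecMul y T) ≤ hilbertDist z y := by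
  apply Real.iSup_le _ (hilbertDist_nonneg z y)
  rintro ⟨⟨r, s⟩, hrs⟩
  have hN : Nonempty (Fin N) := ⟨r⟩
  have hv : ∀ (w : Fin N → ℝ) (t : Fin N), Matrix.vecMul w T t = ∑ i, w i * T i t := by
    intro w t; simp [Matrix.vecMul, dotProduct]
  have hApos : ∀ (w : Fin N → ℝ), (∀ i, 0 < w i) → ∀ t, 0 < ∑ i, w i * T i t := by
    intro w hw t
    exact Finset.sum_pos (fun i _ => mul_pos (hw i) (hT i t)) Finset.univ_nonempty
  simp only [hv]
  set D := hilbertDist z y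
  have hA := hApos z hz r
  have hB := hApos z hz s
  have hC := hApos y hy s
  have hE := hApos y hy r
  have h1 := prod_bound T hT z y hz hy r s
  have h2 := prod_bound T hT z y hz hy s r
  have hX : 0 < ((∑ i, z i * T i r) / (∑ i, z i * T i s)) *
      ((∑ i, y i * T i s) / (∑ i, y i * T i r)) := by positivity
  rw [abs_le]
  constructor
  · rw [Real.le_log_iff_exp_le hX, Real.exp_neg, div_mul_div_comm,
      le_div_iff₀ (by positivity), inv_mul_le_iff₀ (Real.exp_pos D)]
    linarith
  · rw [Real.log_le_iff_le_exp hX, div_mul_div_comm, div_le_iff₀ (by positivity)]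
    linarith
end

section
/- Birkhoff's contraction bound: for a 2×2 matrix T with strictly positive entries t_{11}, t_{12}, t_{21}, t_{22}, and strictly positive row vectors z, y, the Hilbert projective distance satisfies d(zT, yT) ≤ τ · d(z,y), where τ = (1 − √φ)/(1 + √φ) < 1 and φ = min(t_{11}t_{22}/(t_{21}t_{12}), t_{21}t_{12}/(t_{11}t_{22})). -/
/-! In the coordinate `s = log (w₀ / w₁)` the Hilbert distance is `|s - s'|` and right
multiplication by `T` becomes `s ↦ log (t₁₁ eˢ + t₂₁) - log (t₁₂ eˢ + t₂₂)`, whose derivative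
is `u (t₁₁t₂₂ - t₂₁t₁₂) / ((t₁₁u + t₂₁)(t₁₂u + t₂₂))` with `u = eˢ`. By AM-GM the denominator
is at least `(√(t₁₁t₂₂) + √(t₂₁t₁₂))² u`, so the derivative is bounded by
`|√(t₁₁t₂₂) - √(t₂₁t₁₂)| / (√(t₁₁t₂₂) + √(t₂₁t₁₂)) = (1 - √φ)/(1 + √φ)`, and the mean value
theorem gives the contraction. -/

open Real

noncomputable def hilbertDist2 (z y : Fin 2 → ℝ) : ℝ :=
  |Real.log ((z 0 / z 1) * (y 1 / y 0))|

noncomputable def birkhoffCoeff (p q : ℝ) : ℝ :=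
  (1 - √(min (p / q) (q / p))) / (1 + √(min (p / q) (q / p)))

lemma birkhoffCoeff_lt_one {p q : ℝ} (hp : 0 < p) (hq : 0 < q) : birkhoffCoeff p q < 1 := by
  have hφ : 0 < √(min (p / q) (q / p)) := sqrt_pos.2 (lt_min (by positivity) (by positivity))
  exact (div_lt_one (by linarith)).2 (by linarith)

lemma birkhoffCoeff_eq {p q : ℝ} (hp : 0 < p) (hq : 0 < q) :
    birkhoffCoeff p q = |√p - √q| / (√p + √q) := by
  have hp' : 0 < √p := sqrt_pos.2 hp
  have hq' : 0 < √q := sqrt_pos.2 hq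
  unfold birkhoffCoeff
  rcases le_total p q with h | h
  · rw [min_eq_left ((div_le_div_iff₀ hq hp).2 (by nlinarith)), sqrt_div hp.le,
      abs_of_nonpos (by linarith [sqrt_le_sqrt h]), div_eq_div_iff (by positivity) (by positivity)]
    field_simp
    ring
  · rw [min_eq_right ((div_le_div_iff₀ hp hq).2 (by nlinarith)), sqrt_div hq.le,
      abs_of_nonneg (by linarith [sqrt_le_sqrt h]), div_eq_div_iff (by positivity) (by positivity)]
    field_simp

lemma sq_sqrt_add_sqrt_mul_le {a b c d t : ℝ} (ha : 0 ≤ a) (hb : 0 ≤ b) (hc : 0 ≤ c)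
    (hd : 0 ≤ d) :
    (√(a * d) + √(c * b)) ^ 2 * t ≤ (a * t + c) * (b * t + d) := by
  have hmul : √(a * d) * √(c * b) = √(a * b) * √(c * d) := by
    rw [← sqrt_mul (by positivity), ← sqrt_mul (by positivity)]
    ring_nf
  have hdiff : (a * t + c) * (b * t + d) - (√(a * d) + √(c * b)) ^ 2 * t =
      (√(a * b) * t - √(c * d)) ^ 2 := by
    rw [add_sq, sub_sq, mul_assoc 2, hmul, mul_pow, sq_sqrt (by positivity),
      sq_sqrt (by positivity), sq_sqrt (by positivity), sq_sqrt (by positivity)]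
    ring
  linarith [sq_nonneg (√(a * b) * t - √(c * d))]

lemma abs_mul_sub_div_le {a b c d t : ℝ} (ha : 0 < a) (hb : 0 < b) (hc : 0 < c) (hd : 0 < d)
    (ht : 0 ≤ t) :
    |t * (a * d - c * b)| / ((a * t + c) * (b * t + d)) ≤
      |√(a * d) - √(c * b)| / (√(a * d) + √(c * b)) := by
  have hp : 0 < √(a * d) := sqrt_pos.2 (by positivity)
  have hq : 0 < √(c * b) := sqrt_pos.2 (by positivity)
  have hfactor : a * d - c * b = (√(a * d) - √(c * b)) * (√(a * d) + √(c * b)) := by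
    rw [mul_comm (_ - _), ← sq_sub_sq, sq_sqrt (by positivity), sq_sqrt (by positivity)]
  rw [hfactor, abs_mul, abs_mul, abs_of_nonneg ht, abs_of_pos (add_pos hp hq),
    div_le_div_iff₀ (by positivity) (add_pos hp hq)]
  calc t * (|√(a * d) - √(c * b)| * (√(a * d) + √(c * b))) * (√(a * d) + √(c * b))
      = |√(a * d) - √(c * b)| * ((√(a * d) + √(c * b)) ^ 2 * t) := by ring
    _ ≤ |√(a * d) - √(c * b)| * ((a * t + c) * (b * t + d)) :=
      mul_le_mul_of_nonneg_left (sq_sqrt_add_sqrt_mul_le ha.le hb.le hc.le hd.le)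
        (abs_nonneg _)

noncomputable def logRatio (w : Fin 2 → ℝ) : ℝ := log (w 0 / w 1)

noncomputable def logRatioMap (T : Matrix (Fin 2) (Fin 2) ℝ) (s : ℝ) : ℝ :=
  log (T 0 0 * exp s + T 1 0) - log (T 0 1 * exp s + T 1 1)

lemma hilbertDist2_eq_abs_logRatio_sub {w x : Fin 2 → ℝ} (hw : ∀ i, 0 < w i)
    (hx : ∀ i, 0 < x i) : hilbertDist2 w x = |logRatio w - logRatio x| := by
  have hw' : 0 < w 0 / w 1 := div_pos (hw 0) (hw 1)
  have hx' : 0 < x 0 / x 1 := div_pos (hx 0) (hx 1)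
  rw [hilbertDist2, ← inv_div (x 0), log_mul hw'.ne' (inv_pos.2 hx').ne', log_inv,
    ← sub_eq_add_neg, logRatio, logRatio]

lemma vecMul_pos {m n : Type*} [Fintype m] [Nonempty m] {w : m → ℝ}
    {T : Matrix m n ℝ} (hw : ∀ i, 0 < w i) (hT : ∀ i j, 0 < T i j) (j : n) :
    0 < Matrix.vecMul w T j :=
  Finset.sum_pos (fun i _ => mul_pos (hw i) (hT i j)) Finset.univ_nonempty

lemma logRatio_vecMul {T : Matrix (Fin 2) (Fin 2) ℝ} (hT : ∀ i j, 0 < T i j)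
    {w : Fin 2 → ℝ} (hw : ∀ i, 0 < w i) :
    logRatio (Matrix.vecMul w T) = logRatioMap T (logRatio w) := by
  have h0 := hw 0
  have h1 := hw 1
  have hT00 := hT 0 0
  have hT01 := hT 0 1
  have hT10 := hT 1 0
  have hT11 := hT 1 1
  rw [logRatio, logRatioMap, logRatio, exp_log (div_pos h0 h1),
    ← log_div (by positivity) (by positivity)]
  congr 1
  simp only [Matrix.vecMul, dotProduct, Fin.sum_univ_two]
  field_simp

lemma hasDerivAt_logRatioMap {T : Matrix (Fin 2) (Fin 2) ℝ} (hT : ∀ i j, 0 < T i j) (s : ℝ) :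
    HasDerivAt (logRatioMap T)
      (exp s * (T 0 0 * T 1 1 - T 1 0 * T 0 1) /
        ((T 0 0 * exp s + T 1 0) * (T 0 1 * exp s + T 1 1))) s := by
  have hT00 := hT 0 0
  have hT01 := hT 0 1
  have hT10 := hT 1 0
  have hT11 := hT 1 1
  have hnum (a c : ℝ) : HasDerivAt (fun s => a * exp s + c) (a * exp s) s :=
    ((hasDerivAt_exp s).const_mul a).add_const c
  refine (((hnum (T 0 0) (T 1 0)).log (by positivity)).sub
    ((hnum (T 0 1) (T 1 1)).log (by positivity))).congr_deriv ?_
  field_simp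
  ring

lemma abs_logRatioMap_sub_le {T : Matrix (Fin 2) (Fin 2) ℝ} (hT : ∀ i j, 0 < T i j)
    (x y : ℝ) :
    |logRatioMap T x - logRatioMap T y| ≤
      birkhoffCoeff (T 0 0 * T 1 1) (T 1 0 * T 0 1) * |x - y| := by
  have hT00 := hT 0 0
  have hT01 := hT 0 1
  have hT10 := hT 1 0
  have hT11 := hT 1 1
  rw [birkhoffCoeff_eq (by positivity) (by positivity)]
  have hbound (s : ℝ) : ‖exp s * (T 0 0 * T 1 1 - T 1 0 * T 0 1) /
      ((T 0 0 * exp s + T 1 0) * (T 0 1 * exp s + T 1 1))‖ ≤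
      |√(T 0 0 * T 1 1) - √(T 1 0 * T 0 1)| / (√(T 0 0 * T 1 1) + √(T 1 0 * T 0 1)) := by
    have hden : 0 < (T 0 0 * exp s + T 1 0) * (T 0 1 * exp s + T 1 1) := by positivity
    rw [norm_eq_abs, abs_div, abs_of_pos hden]
    exact abs_mul_sub_div_le hT00 hT01 hT10 hT11 (exp_pos s).le
  simpa only [norm_eq_abs] using Convex.norm_image_sub_le_of_norm_hasDerivWithin_le
    (fun s _ => (hasDerivAt_logRatioMap hT s).hasDerivWithinAt) (fun s _ => hbound s)
    convex_univ (Set.mem_univ y) (Set.mem_univ x)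

/-- Birkhoff's contraction bound for a 2×2 strictly positive
matrix `T`: `d(zT, yT) ≤ τ · d(z,y)` with
`τ = (1 − √φ)/(1 + √φ) < 1`, `φ = min(t₁₁t₂₂/(t₂₁t₁₂), t₂₁t₁₂/(t₁₁t₂₂))`. -/
theorem stmt_6 (T : Matrix (Fin 2) (Fin 2) ℝ) (hT : ∀ i j, 0 < T i j)
    (z y : Fin 2 → ℝ) (hz : ∀ i, 0 < z i) (hy : ∀ i, 0 < y i) :
    hilbertDist2 (Matrix.vecMul z T) (Matrix.vecMul y T) ≤
        ((1 - Real.sqrt (min (T 0 0 * T 1 1 / (T 1 0 * T 0 1))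
              (T 1 0 * T 0 1 / (T 0 0 * T 1 1)))) /
          (1 + Real.sqrt (min (T 0 0 * T 1 1 / (T 1 0 * T 0 1))
              (T 1 0 * T 0 1 / (T 0 0 * T 1 1))))) * hilbertDist2 z y ∧
      (1 - Real.sqrt (min (T 0 0 * T 1 1 / (T 1 0 * T 0 1))
            (T 1 0 * T 0 1 / (T 0 0 * T 1 1)))) /
          (1 + Real.sqrt (min (T 0 0 * T 1 1 / (T 1 0 * T 0 1))
            (T 1 0 * T 0 1 / (T 0 0 * T 1 1)))) < 1 := by
  change _ ≤ birkhoffCoeff (T 0 0 * T 1 1) (T 1 0 * T 0 1) * _ ∧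
    birkhoffCoeff (T 0 0 * T 1 1) (T 1 0 * T 0 1) < 1
  refine ⟨?_, birkhoffCoeff_lt_one (mul_pos (hT 0 0) (hT 1 1)) (mul_pos (hT 1 0) (hT 0 1))⟩
  rw [hilbertDist2_eq_abs_logRatio_sub (vecMul_pos hz hT) (vecMul_pos hy hT),
    hilbertDist2_eq_abs_logRatio_sub hz hy, logRatio_vecMul hT hz, logRatio_vecMul hT hy]
  exact abs_logRatioMap_sub_le hT _ _
end

section
/- The Cantor machine generates the same process as a biased coin: for any word w over the alphabet {□, △}, and any η in the simplex, η T^(w) 𝟙 = a^{n_□(w)} (1−a)^{n_△(w)}, where T^(w) is the product of the symbol matrices along w and n_x(w) counts occurrences of x in w. In particular, the word probabilities are independent of η and are i.i.d. Bernoulli(a). -/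
/-- Cantor machine symbol-labeled matrices: `false` = `□`, `true` = `△`. -/
noncomputable def cantorT (a s : ℝ) : Bool → Matrix (Fin 2) (Fin 2) ℝ
  | false => !![a / s, a * (s - 1) / s; 0, a]
  | true => !![1 - a, 0; (s - 1) * (1 - a) / s, (1 - a) / s]

lemma cantor_key (a s : ℝ) (hs : s ≠ 0) (w : List Bool) :
    ∀ η : Fin 2 → ℝ,
      (∑ j, Matrix.vecMul η ((w.map (cantorT a s)).prod) j) =
        a ^ (w.count false) * (1 - a) ^ (w.count true) * ∑ i, η i := by
  induction w with
  | nil =>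
    intro η
    simp [Matrix.vecMul_one]
  | cons x t ih =>
    intro η
    have step : (∑ i, Matrix.vecMul η (cantorT a s x) i) =
        (if x then (1 - a) else a) * ∑ i, η i := by
      cases x <;>
        · simp [cantorT, Matrix.vecMul, dotProduct, Fin.sum_univ_two]
          field_simp
          ring
    have : ((x :: t).map (cantorT a s)).prod =
        cantorT a s x * ((t.map (cantorT a s)).prod) := by simp
    rw [this]
    have := ih (Matrix.vecMul η (cantorT a s x))
    simp only [← Matrix.vecMul_vecMul]
    rw [this, step]
    cases x <;> simp [List.count_cons] <;> ring
/-- for the Cantor machine (`0 < a < 1`, `s > 2`) and any word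
`w`, the word probability `η T^(w) 𝟙` equals `a^{n_□(w)} (1−a)^{n_△(w)}` for
every `η` in the simplex: the process is i.i.d. Bernoulli(`a`). -/
theorem stmt_12 (a s : ℝ) (ha : 0 < a) (ha1 : a < 1) (hs : 2 < s)
    (w : List Bool) (η : Fin 2 → ℝ) (hη : ∀ i, 0 ≤ η i) (hηsum : (∑ i, η i) = 1) :
    (∑ j, Matrix.vecMul η ((w.map (cantorT a s)).prod) j) =
      a ^ (w.count false) * (1 - a) ^ (w.count true) := by
  rw [cantor_key a s (by linarith) w η, hηsum, mul_one]
end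

section
/- For the 3-state machine M_{3S}, the mixed state after observing □ followed by n △'s is η(△^n) = (2(3^n − 2^n)/(4·3^n − 3·2^n), 2(3^n − 2^n)/(4·3^n − 3·2^n), 2^n/(4·3^n − 3·2^n)) for all n ≥ 0, where η(△^0) = (0,0,1). -/
/-- Transition matrix of `M_{3S}` for symbol `△`. -/
noncomputable def m3sTr : Matrix (Fin 3) (Fin 3) ℝ :=
  !![0, 0, 0; 1/2, 1/2, 0; 1/3, 1/3, 1/3]

/-- Mixed-state update on symbol `△`: `η ↦ ηT^(△)/(ηT^(△)𝟙)`. -/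
noncomputable def m3sUpdate (η : Fin 3 → ℝ) : Fin 3 → ℝ :=
  fun j => Matrix.vecMul η m3sTr j / (∑ k, Matrix.vecMul η m3sTr k)

/-!
The update is the projective action `η ↦ [η T]` of the matrix `T = T^(△)` followed by rescaling
to total mass one, so it suffices to follow unnormalised weights. The weights
`(2(3ⁿ - 2ⁿ), 2(3ⁿ - 2ⁿ), 2ⁿ)` start at `(0, 0, 1)` and are mapped by `T` to `1/6` of the next
ones; their total mass is `4·3ⁿ - 3·2ⁿ`.
-/

open Matrix

section NormalizeMass

variable {ι K : Type*} [Fintype ι] [Field K]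

def normalizeMass (w : ι → K) : ι → K := (∑ i, w i)⁻¹ • w

theorem normalizeMass_smul {c : K} (hc : c ≠ 0) (w : ι → K) :
    normalizeMass (c • w) = normalizeMass w := by
  simp only [normalizeMass, Pi.smul_apply, smul_eq_mul, ← Finset.mul_sum, smul_smul]
  rw [mul_inv, mul_right_comm, inv_mul_cancel₀ hc, one_mul]

theorem normalizeMass_vecMul_normalizeMass (M : Matrix ι ι K) {w : ι → K} (hw : ∑ i, w i ≠ 0) :
    normalizeMass (normalizeMass w ᵥ* M) = normalizeMass (w ᵥ* M) := by
  rw [normalizeMass.eq_1 w, smul_vecMul, normalizeMass_smul (inv_ne_zero hw)]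

end NormalizeMass

theorem m3sUpdate_eq_normalizeMass (η : Fin 3 → ℝ) :
    m3sUpdate η = normalizeMass (η ᵥ* m3sTr) := by
  funext j
  simp only [m3sUpdate, normalizeMass, Pi.smul_apply, smul_eq_mul, div_eq_inv_mul]

theorem vecMul_m3sTr (a b c : ℝ) :
    ![a, b, c] ᵥ* m3sTr = ![b / 2 + c / 3, b / 2 + c / 3, c / 3] := by
  ext j
  fin_cases j <;> simp [m3sTr, vecMul, dotProduct, Fin.sum_univ_three, div_eq_mul_inv]

noncomputable def m3sWeight (n : ℕ) : Fin 3 → ℝ :=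
  ![2 * (3 ^ n - 2 ^ n), 2 * (3 ^ n - 2 ^ n), 2 ^ n]

theorem m3sWeight_vecMul (n : ℕ) : m3sWeight n ᵥ* m3sTr = (6 : ℝ)⁻¹ • m3sWeight (n + 1) := by
  rw [m3sWeight, m3sWeight, vecMul_m3sTr, smul_vec3]
  refine vec3_eq ?_ ?_ ?_ <;> simp only [smul_eq_mul, pow_succ] <;> ring

theorem sum_m3sWeight (n : ℕ) : ∑ i, m3sWeight n i = 4 * 3 ^ n - 3 * 2 ^ n := by
  simp only [m3sWeight, Fin.sum_univ_three, Fin.isValue, cons_val_zero, cons_val_one, cons_val]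
  ring

theorem sum_m3sWeight_pos (n : ℕ) : 0 < ∑ i, m3sWeight n i := by
  have h2 : (0 : ℝ) < 2 ^ n := by positivity
  have h23 : (2 : ℝ) ^ n ≤ 3 ^ n := pow_le_pow_left₀ (by norm_num) (by norm_num) n
  rw [sum_m3sWeight]
  linarith

theorem normalizeMass_m3sWeight (n : ℕ) :
    normalizeMass (m3sWeight n) =
      ![2 * ((3 : ℝ) ^ n - 2 ^ n) / (4 * 3 ^ n - 3 * 2 ^ n),
        2 * ((3 : ℝ) ^ n - 2 ^ n) / (4 * 3 ^ n - 3 * 2 ^ n),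
        (2 : ℝ) ^ n / (4 * 3 ^ n - 3 * 2 ^ n)] := by
  rw [normalizeMass, sum_m3sWeight]
  funext j
  fin_cases j <;> simp [m3sWeight, div_eq_inv_mul]

/-- for the machine `M_{3S}`, the mixed state after observing `□`
followed by `n` `△`'s (i.e. the `n`-th iterate of the `△`-update starting from
`η(△⁰) = (0,0,1)`) is
`(2(3ⁿ − 2ⁿ)/(4·3ⁿ − 3·2ⁿ), 2(3ⁿ − 2ⁿ)/(4·3ⁿ − 3·2ⁿ), 2ⁿ/(4·3ⁿ − 3·2ⁿ))`. -/
theorem stmt_14 (n : ℕ) :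
    m3sUpdate^[n] ![0, 0, 1] =
      ![2 * ((3 : ℝ) ^ n - 2 ^ n) / (4 * 3 ^ n - 3 * 2 ^ n),
        2 * ((3 : ℝ) ^ n - 2 ^ n) / (4 * 3 ^ n - 3 * 2 ^ n),
        (2 : ℝ) ^ n / (4 * 3 ^ n - 3 * 2 ^ n)] := by
  rw [← normalizeMass_m3sWeight]
  induction n with
  | zero =>
    funext j
    fin_cases j <;> simp [normalizeMass, m3sWeight, Fin.sum_univ_three]
  | succ n ih =>
    rw [Function.iterate_succ_apply', ih, m3sUpdate_eq_normalizeMass,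
      normalizeMass_vecMul_normalizeMass _ (sum_m3sWeight_pos n).ne', m3sWeight_vecMul,
      normalizeMass_smul (by norm_num)]
end

section
/- Every entry-wise positive linear map contracts the Hilbert projective diameter: if T is an N×N matrix with strictly positive entries, then the image of the strictly positive cone under right multiplication by T has finite Hilbert-projective diameter, namely sup over strictly positive z, y of d(zT, yT) ≤ max_{r,s,j,k} log( (T_{rj} T_{sk}) / (T_{sj} T_{rk}) ). -/
/-- Positivity of `zT`. -/
lemma vecMul_pos_s17 {N : ℕ} (hN : 0 < N) (T : Matrix (Fin N) (Fin N) ℝ)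
    (hT : ∀ i j, 0 < T i j) (z : Fin N → ℝ) (hz : ∀ i, 0 < z i) (r : Fin N) :
    0 < Matrix.vecMul z T r := by
  have : Matrix.vecMul z T r = ∑ j, z j * T j r := by
    simp [Matrix.vecMul, dotProduct]
  rw [this]
  exact Finset.sum_pos (fun j _ => mul_pos (hz j) (hT j r))
    ⟨⟨0, hN⟩, Finset.mem_univ _⟩

/-- Mediant bound: `(zT)_r ≤ (T_{j0 r}/T_{j0 s}) (zT)_s` for a maximizing `j0`. -/
lemma vecMul_ratio {N : ℕ} (hN : 0 < N) (T : Matrix (Fin N) (Fin N) ℝ)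
    (hT : ∀ i j, 0 < T i j) (z : Fin N → ℝ) (hz : ∀ i, 0 < z i) (r s : Fin N) :
    ∃ j0, Matrix.vecMul z T r ≤ (T j0 r / T j0 s) * Matrix.vecMul z T s := by
  obtain ⟨j0, -, hj0⟩ := Finset.exists_max_image Finset.univ (fun j => T j r / T j s)
    ⟨⟨0, hN⟩, Finset.mem_univ _⟩
  refine ⟨j0, ?_⟩
  have h1 : Matrix.vecMul z T r = ∑ j, z j * T j r := by
    simp [Matrix.vecMul, dotProduct]
  have h2 : Matrix.vecMul z T s = ∑ j, z j * T j s := by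
    simp [Matrix.vecMul, dotProduct]
  rw [h1, h2, Finset.mul_sum]
  refine Finset.sum_le_sum fun j _ => ?_
  have hle : T j r / T j s ≤ T j0 r / T j0 s := hj0 j (Finset.mem_univ _)
  have hjs : (0:ℝ) < T j s := hT j s
  have := mul_le_mul_of_nonneg_right hle (le_of_lt (mul_pos (hz j) hjs))
  calc z j * T j r = T j r / T j s * (z j * T j s) := by field_simp
    _ ≤ T j0 r / T j0 s * (z j * T j s) := this

lemma key_ineq {N : ℕ} (hN : 0 < N) (T : Matrix (Fin N) (Fin N) ℝ)
    (hT : ∀ i j, 0 < T i j) (z y : Fin N → ℝ) (hz : ∀ i, 0 < z i) (hy : ∀ i, 0 < y i)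
    (r s : Fin N) :
    Real.log ((Matrix.vecMul z T r / Matrix.vecMul z T s) *
        (Matrix.vecMul y T s / Matrix.vecMul y T r)) ≤
      ⨆ q : Fin N × Fin N × Fin N × Fin N,
        Real.log (T q.1 q.2.2.1 * T q.2.1 q.2.2.2 /
          (T q.2.1 q.2.2.1 * T q.1 q.2.2.2)) := by
  obtain ⟨j0, hj0⟩ := vecMul_ratio hN T hT z hz r s
  obtain ⟨k0, hk0⟩ := vecMul_ratio hN T hT y hy s r
  have hzr := vecMul_pos_s17 hN T hT z hz r
  have hzs := vecMul_pos_s17 hN T hT z hz s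
  have hyr := vecMul_pos_s17 hN T hT y hy r
  have hys := vecMul_pos_s17 hN T hT y hy s
  have hb : BddAbove (Set.range fun q : Fin N × Fin N × Fin N × Fin N =>
      Real.log (T q.1 q.2.2.1 * T q.2.1 q.2.2.2 /
        (T q.2.1 q.2.2.1 * T q.1 q.2.2.2))) := Finite.bddAbove_range _
  refine le_trans ?_ (le_ciSup hb (j0, k0, r, s))
  apply Real.log_le_log (by positivity)
  have e1 : Matrix.vecMul z T r / Matrix.vecMul z T s ≤ T j0 r / T j0 s :=
    (div_le_iff₀ hzs).mpr (by rw [mul_comm]; exact hj0.trans_eq (mul_comm _ _))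
  have e2 : Matrix.vecMul y T s / Matrix.vecMul y T r ≤ T k0 s / T k0 r :=
    (div_le_iff₀ hyr).mpr (by rw [mul_comm]; exact hk0.trans_eq (mul_comm _ _))
  calc Matrix.vecMul z T r / Matrix.vecMul z T s *
        (Matrix.vecMul y T s / Matrix.vecMul y T r)
      ≤ T j0 r / T j0 s * (T k0 s / T k0 r) := by
        apply mul_le_mul e1 e2 (by positivity)
        have := hT j0 r; have := hT j0 s; positivity
    _ = T j0 r * T k0 s / (T k0 r * T j0 s) := by
        rw [div_mul_div_comm, mul_comm (T j0 s)]

/-- an entrywise strictly positive matrix maps the positive cone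
to a set of finite Hilbert-projective diameter:
`d(zT, yT) ≤ max_{r,s,j,k} log(T_{rj} T_{sk} / (T_{sj} T_{rk}))`
for all strictly positive `z, y`. -/
theorem stmt_17 {N : ℕ} (T : Matrix (Fin N) (Fin N) ℝ) (hT : ∀ i j, 0 < T i j)
    (z y : Fin N → ℝ) (hz : ∀ i, 0 < z i) (hy : ∀ i, 0 < y i) :
    hilbertDist (Matrix.vecMul z T) (Matrix.vecMul y T) ≤
      ⨆ q : Fin N × Fin N × Fin N × Fin N,
        Real.log (T q.1 q.2.2.1 * T q.2.1 q.2.2.2 /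
          (T q.2.1 q.2.2.1 * T q.1 q.2.2.2)) := by
  rcases Nat.eq_zero_or_pos N with hN | hN
  · subst hN
    have h1 : hilbertDist (Matrix.vecMul z T) (Matrix.vecMul y T) = 0 := by
      have : IsEmpty {p : Fin 0 × Fin 0 // p.1 ≠ p.2} := by
        constructor; rintro ⟨⟨⟨_, h⟩, _⟩, _⟩; omega
      simp [hilbertDist, Real.iSup_of_isEmpty]
    have h2 : (⨆ q : Fin 0 × Fin 0 × Fin 0 × Fin 0,
        Real.log (T q.1 q.2.2.1 * T q.2.1 q.2.2.2 /
          (T q.2.1 q.2.2.1 * T q.1 q.2.2.2))) = 0 := by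
      simp [Real.iSup_of_isEmpty]
    rw [h1, h2]
  · have hb : BddAbove (Set.range fun q : Fin N × Fin N × Fin N × Fin N =>
        Real.log (T q.1 q.2.2.1 * T q.2.1 q.2.2.2 /
          (T q.2.1 q.2.2.1 * T q.1 q.2.2.2))) := Finite.bddAbove_range _
    have hM0 : (0:ℝ) ≤ ⨆ q : Fin N × Fin N × Fin N × Fin N,
        Real.log (T q.1 q.2.2.1 * T q.2.1 q.2.2.2 /
          (T q.2.1 q.2.2.1 * T q.1 q.2.2.2)) := by
      have h0 : Real.log (T ⟨0, hN⟩ ⟨0, hN⟩ * T ⟨0, hN⟩ ⟨0, hN⟩ /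
          (T ⟨0, hN⟩ ⟨0, hN⟩ * T ⟨0, hN⟩ ⟨0, hN⟩)) = 0 := by
        have := hT ⟨0, hN⟩ ⟨0, hN⟩
        rw [div_self (by positivity), Real.log_one]
      calc (0:ℝ) = _ := h0.symm
        _ ≤ _ := le_ciSup hb (⟨0, hN⟩, ⟨0, hN⟩, ⟨0, hN⟩, ⟨0, hN⟩)
    apply Real.iSup_le _ hM0
    rintro ⟨⟨r, s⟩, -⟩
    rw [abs_le]
    constructor
    · rw [neg_le]
      have hzr := vecMul_pos_s17 hN T hT z hz r
      have hzs := vecMul_pos_s17 hN T hT z hz s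
      have hyr := vecMul_pos_s17 hN T hT y hy r
      have hys := vecMul_pos_s17 hN T hT y hy s
      have : -Real.log (Matrix.vecMul z T r / Matrix.vecMul z T s *
          (Matrix.vecMul y T s / Matrix.vecMul y T r)) =
          Real.log (Matrix.vecMul z T s / Matrix.vecMul z T r *
          (Matrix.vecMul y T r / Matrix.vecMul y T s)) := by
        rw [← Real.log_inv]
        congr 1
        field_simp
      rw [this]
      exact key_ineq hN T hT z y hz hy s r
    · exact key_ineq hN T hT z y hz hy r s
end
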